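/- For every subgroup P of Γ of order p, the normalizer of P in Γ equals P; in other words, the Weyl group N_Γ(P)/P is trivial. -/

import Mathlib

open Multiplicative

/-- The action of `GL n ℤ` on `ℤⁿ`, as a homomorphism
`Multiplicative (ZMod p) →* MulAut (Multiplicative (Fin n → ℤ))`. -/
def matAutHom {p n : ℕ} (ρ : Multiplicative (ZMod p) →* Matrix.GeneralLinearGroup (Fin n) ℤ) :
    Multiplicative (ZMod p) →* MulAut (Multiplicative (Fin n → ℤ)) where
  toFun g :=
    { toFun := fun v => Multiplicative.ofAdd ((ρ g : Matrix (Fin n) (Fin n) ℤ).mulVec v.toAdd)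
      invFun := fun v =>
        Multiplicative.ofAdd ((((ρ g)⁻¹ : Matrix.GeneralLinearGroup (Fin n) ℤ) :
          Matrix (Fin n) (Fin n) ℤ).mulVec v.toAdd)
      left_inv := fun v => by simp [Matrix.mulVec_mulVec]
      right_inv := fun v => by simp [Matrix.mulVec_mulVec]
      map_mul' := fun u v => by simp [Matrix.mulVec_add] }
  map_one' := by ext v; simp
  map_mul' g h := by ext v; simp [Matrix.mulVec_mulVec]

/-- The group `Γ = ℤⁿ ⋊_ρ ℤ/p`. -/
abbrev Gamma {p n : ℕ} (ρ : Multiplicative (ZMod p) →* Matrix.GeneralLinearGroup (Fin n) ℤ) :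
    Type :=
  SemidirectProduct (Multiplicative (Fin n → ℤ)) (Multiplicative (ZMod p)) (matAutHom ρ)

/-! A subgroup of order `p` is generated by some `x` of order `p`. As `ℤⁿ` is torsion-free, the
image of `x` in the abelian quotient `ℤ/p` still has order `p`, so if `y x y⁻¹ = xᵏ` then
`k ≡ 1 mod p`, i.e. every `y` normalizing `⟨x⟩` commutes with `x`. Since the image of `x`
generates `ℤ/p`, some `y x⁻ᵐ` lies in `ℤⁿ` and commutes with `x`, i.e. is a fixed vector of
`ρ(g)` for the image `g ≠ 1` of `x`; freeness makes it `0`, so `y = xᵐ`. -/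

theorem commute_of_mem_normalizer_zpowers_of_orderOf_map_eq {G A : Type*} [Group G]
    [CommGroup A] (f : G →* A) {x y : G} (hfx : orderOf (f x) = orderOf x)
    (hy : y ∈ Subgroup.normalizer (Subgroup.zpowers x : Set G)) : Commute y x := by
  obtain ⟨k, hk : x ^ k = y * x * y⁻¹⟩ :=
    (Subgroup.mem_normalizer_iff.mp hy x).mp (Subgroup.mem_zpowers x)
  have hfk : f x ^ (k - 1) = 1 := by
    rw [zpow_sub_one, ← map_zpow, hk, map_mul, map_mul, map_inv, mul_right_comm,
      mul_inv_cancel_right, mul_inv_cancel]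
  have hxk : x ^ (k - 1) = 1 := by
    rwa [← orderOf_dvd_iff_zpow_eq_one, ← hfx, orderOf_dvd_iff_zpow_eq_one]
  rw [zpow_sub_one, mul_inv_eq_one] at hxk
  exact mul_inv_eq_iff_eq_mul.mp (hk.symm.trans hxk)

namespace SemidirectProduct

variable {N G : Type*} [Group G]

section

variable [Group N] {φ : G →* MulAut N}

theorem inl_left_eq_self_of_right_eq_one {x : N ⋊[φ] G} (hx : x.right = 1) : inl x.left = x := by
  ext <;> simp [hx]

theorem right_pow (x : N ⋊[φ] G) (k : ℕ) : (x ^ k).right = x.right ^ k :=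
  map_pow (rightHom (φ := φ)) x k

theorem right_zpow (x : N ⋊[φ] G) (k : ℤ) : (x ^ k).right = x.right ^ k :=
  map_zpow (rightHom (φ := φ)) x k

theorem orderOf_right_eq_orderOf [IsMulTorsionFree N] {x : N ⋊[φ] G} (hx : IsOfFinOrder x) :
    orderOf x.right = orderOf x := by
  refine Nat.dvd_antisymm (orderOf_map_dvd rightHom x) (orderOf_dvd_of_pow_eq_one ?_)
  have hy : inl (x ^ orderOf x.right).left = x ^ orderOf x.right :=
    inl_left_eq_self_of_right_eq_one (by rw [right_pow, pow_orderOf_eq_one])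
  have hfin : IsOfFinOrder (x ^ orderOf x.right).left := by
    rw [← (inl_injective (φ := φ)).isOfFinOrder_iff (f := inl), hy]
    exact hx.pow
  rw [← hy, hfin.eq_one', map_one]

end

variable [CommGroup N] {φ : G →* MulAut N}

theorem commute_inl_iff {n : N} {x : N ⋊[φ] G} : Commute (inl n) x ↔ φ x.right n = n := by
  simp [Commute, SemiconjBy, SemidirectProduct.ext_iff, mul_comm n, eq_comm]

theorem mem_zpowers_of_commute {x y : N ⋊[φ] G} (hy : y.right ∈ Subgroup.zpowers x.right)
    (hfix : ∀ n, φ x.right n = n → n = 1) (hyx : Commute y x) : y ∈ Subgroup.zpowers x := by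
  obtain ⟨m, hm : x.right ^ m = y.right⟩ := hy
  set z := y * (x ^ m)⁻¹
  have hz : inl z.left = z :=
    inl_left_eq_self_of_right_eq_one (by simp [z, right_zpow, hm])
  have hzx : Commute z x := hyx.mul_left ((Commute.refl x).zpow_left m).inv_left
  rw [← hz, commute_inl_iff] at hzx
  have hz1 : z = 1 := by rw [← hz, hfix _ hzx, map_one]
  exact ⟨m, (mul_inv_eq_one.mp hz1).symm⟩

end SemidirectProduct

theorem matAutHom_eq_self_iff {p n : ℕ}
    (ρ : Multiplicative (ZMod p) →* Matrix.GeneralLinearGroup (Fin n) ℤ)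
    {g : Multiplicative (ZMod p)} {v : Multiplicative (Fin n → ℤ)} :
    matAutHom ρ g v = v ↔ (ρ g : Matrix (Fin n) (Fin n) ℤ).mulVec v.toAdd = v.toAdd :=
  toAdd.injective.eq_iff.symm

theorem normalizer_eq_self_of_card_p_general (p n : ℕ) (hp : p.Prime)
    (ρ : Multiplicative (ZMod p) →* Matrix.GeneralLinearGroup (Fin n) ℤ)
    (hfree : ∀ g : Multiplicative (ZMod p), g ≠ 1 → ∀ v : Fin n → ℤ,
      (ρ g : Matrix (Fin n) (Fin n) ℤ).mulVec v = v → v = 0)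
    (P : Subgroup (Gamma ρ)) (hP : Nat.card P = p) :
    Subgroup.normalizer (P : Set (Gamma ρ)) = P := by
  have : Fact p.Prime := ⟨hp⟩
  obtain ⟨x, rfl⟩ := P.isCyclic_iff_exists_zpowers_eq_top.mp (isCyclic_of_prime_card hP)
  have hx : orderOf x = p := by rw [← Nat.card_zpowers, hP]
  have hxr : orderOf x.right = p := by
    rw [SemidirectProduct.orderOf_right_eq_orderOf (orderOf_pos_iff.mp (hx.symm ▸ hp.pos)), hx]
  have hxr1 : x.right ≠ 1 := by
    rw [ne_eq, ← orderOf_eq_one_iff, hxr]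
    exact hp.ne_one
  refine le_antisymm (fun y hy => ?_) Subgroup.le_normalizer
  refine SemidirectProduct.mem_zpowers_of_commute ?_ ?_
    (commute_of_mem_normalizer_zpowers_of_orderOf_map_eq SemidirectProduct.rightHom ?_ hy)
  · exact mem_zpowers_of_prime_card (p := p) (by simp [Nat.card_eq_fintype_card]) hxr1
  · exact fun v hv => toAdd_eq_zero.mp (hfree _ hxr1 _ ((matAutHom_eq_self_iff ρ).mp hv))
  · rw [SemidirectProduct.rightHom_eq_right, hxr, hx]

/-- For every subgroup `P` of `Γ = ℤⁿ ⋊_ρ ℤ/p` of order `p`, the normalizer of `P` in `Γ`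
equals `P`; i.e. the Weyl group `N_Γ(P)/P` is trivial. -/
theorem normalizer_eq_self_of_card_p (p n : ℕ) (hp : p.Prime) (hodd : Odd p) (hn : 0 < n)
    (ρ : Multiplicative (ZMod p) →* Matrix.GeneralLinearGroup (Fin n) ℤ)
    (hfree : ∀ g : Multiplicative (ZMod p), g ≠ 1 → ∀ v : Fin n → ℤ,
      (ρ g : Matrix (Fin n) (Fin n) ℤ).mulVec v = v → v = 0)
    (P : Subgroup (Gamma ρ)) (hP : Nat.card P = p) :
    Subgroup.normalizer (P : Set (Gamma ρ)) = P :=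
  normalizer_eq_self_of_card_p_general p n hp ρ hfree P hP
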